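/- arXiv:2501.06621 — 3 statements merged into one kernel-verified Lean document; each statement's English description precedes it below -/
import Mathlib

section
/- Let K and M be invertible n×n complex matrices such that M⁻¹K is diagonalizable, let v̂_1,…,v̂_n be right eigenvectors and v̌_1,…,v̌_n left eigenvectors of the pencil (K,M), each family a basis of ℂⁿ, with common eigenvalues λ_1,…,λ_n ordered so that |1−λ_1| ≥ |1−λ_2| ≥ ⋯ ≥ |1−λ_n| and biorthonormalized so that v̌_i* M v̂_j = δ_ij. Fix n_c with 1 ≤ n_c < n, and let P_♯ be the n×n_c matrix whose columns are v̂_1,…,v̂_{n_c} and R_♯ the n_c×n matrix whose rows are v̌_1*,…,v̌_{n_c}*. Then R_♯ K P_♯ is invertible and the spectral radius of the two-grid error-propagation operator satisfies ρ(E_TG(P_♯, R_♯)) = |1 − λ_{n_c+1}|. -/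
/-!
Put the right eigenvectors into the columns of `V` and the conjugated left eigenvectors into
the rows of `W`. Biorthonormality reads `W M V = 1`, so `V` is invertible and
`(1 - M⁻¹ K) V = V (1 - Λ)`. Since `P♯ = V[:, :n_c]` and `R♯ = W[:n_c, :]`, the coarse matrix
`R♯ K P♯` is the leading `n_c × n_c` block of `W K V = Λ`, and the coarse correction
`P♯ (R♯ K P♯)⁻¹ R♯ K` maps `V` to `V` times the coordinate projection onto the first `n_c`
indices. Hence `E_TG V = V D` with `D = diag(0, …, 0, 1 - λ_{n_c+1}, …, 1 - λ_n)`, whose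
largest modulus is `|1 - λ_{n_c+1}|` by the ordering of the eigenvalues.
-/

open Matrix

/-- Spectral radius of a square complex matrix: the maximum modulus of its eigenvalues. -/
noncomputable def specRad {n : ℕ} (A : Matrix (Fin n) (Fin n) ℂ) : ℝ :=
  sSup ((fun z : ℂ => ‖z‖) '' spectrum ℂ A)

/-- Two-grid error-propagation operator `E_TG(P,R) = (I − P (RKP)⁻¹ R K)(I − M⁻¹ K)`. -/
noncomputable def ETG {n nc : ℕ} (K M : Matrix (Fin n) (Fin n) ℂ)
    (P : Matrix (Fin n) (Fin nc) ℂ) (R : Matrix (Fin nc) (Fin n) ℂ) :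
    Matrix (Fin n) (Fin n) ℂ :=
  (1 - P * (R * K * P)⁻¹ * R * K) * (1 - M⁻¹ * K)

namespace Matrix

variable {ι κ R : Type*} [CommRing R]

theorem isUnit_of_mul_mul_eq_one [Fintype ι] [DecidableEq ι] {A B C : Matrix ι ι R}
    (h : A * B * C = 1) : IsUnit A ∧ IsUnit B ∧ IsUnit C := by
  have hdet : IsUnit (A.det * B.det * C.det) := by
    rw [← det_mul, ← det_mul, h, det_one]; exact isUnit_one
  simp only [IsUnit.mul_iff, ← isUnit_iff_isUnit_det] at hdet
  exact ⟨hdet.1.1, hdet.1.2, hdet.2⟩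

theorem self_sub_mul_diagonal [Fintype ι] [DecidableEq ι] (A : Matrix ι ι R) (d : ι → R) :
    A - A * diagonal d = A * diagonal (1 - d) := by
  rw [show diagonal (1 - d) = diagonal 1 - diagonal d from (diagonal_sub 1 d).symm,
    diagonal_one', Matrix.mul_sub, Matrix.mul_one]

theorem spectrum_eq_range_of_mul_eq_mul_diagonal {𝕜 : Type*} [Field 𝕜] [Fintype ι]
    [DecidableEq ι] {A V : Matrix ι ι 𝕜} {d : ι → 𝕜} (hV : IsUnit V)
    (h : A * V = V * diagonal d) : spectrum 𝕜 A = Set.range d := by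
  obtain ⟨u, rfl⟩ := hV
  rw [(Units.eq_mul_inv_iff_mul_eq u).mpr h, spectrum.units_conjugate, spectrum_diagonal]

theorem submatrix_mul_mul_submatrix {ν : Type*} [Fintype ι] (W K V : Matrix ι ι R) (f : κ → ι)
    (g : ν → ι) : W.submatrix f id * K * V.submatrix id g = (W * K * V).submatrix f g := by
  rw [submatrix_mul _ _ f id g Function.bijective_id,
    submatrix_mul _ _ f id id Function.bijective_id, submatrix_id_id]

theorem submatrix_diagonal_id [Fintype κ] [DecidableEq ι] [DecidableEq κ] (d : ι → R)
    (f : κ → ι) :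
    (diagonal d).submatrix f id = diagonal (d ∘ f) * (1 : Matrix ι ι R).submatrix f id := by
  ext i j
  simp [diagonal_apply, one_apply]

theorem submatrix_id_mul_submatrix_one [Fintype ι] [DecidableEq ι] [Fintype κ] {f : κ → ι}
    (hf : Function.Injective f) (A : Matrix ι ι R) :
    A.submatrix id f * (1 : Matrix ι ι R).submatrix f id =
      A * diagonal ((Set.range f).indicator 1) := by
  ext i j
  rw [mul_diagonal, mul_apply]
  simp only [submatrix_apply, id, one_apply, mul_ite, mul_one, mul_zero]
  rw [← Finset.sum_image (f := fun k => if k = j then A i k else 0) fun _ _ _ _ h => hf h,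
    Finset.sum_ite_eq']
  simp [Set.indicator_apply]

section Pencil

variable [Fintype ι] [DecidableEq ι] {K M V W : Matrix ι ι R} {lam : ι → R}

theorem mul_eq_mul_mul_diagonal_of_mulVec (h : ∀ j, K *ᵥ Vᵀ j = lam j • M *ᵥ Vᵀ j) :
    K * V = M * V * diagonal lam := by
  ext i j
  rw [mul_diagonal, mul_comm]
  exact congrFun (h j) i

theorem mul_mul_eq_diagonal_of_pencil (hbio : W * M * V = 1)
    (heig : K * V = M * V * diagonal lam) : W * K * V = diagonal lam := by
  rw [Matrix.mul_assoc, heig, ← Matrix.mul_assoc, ← Matrix.mul_assoc, hbio, Matrix.one_mul]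

theorem one_sub_inv_mul_mul_of_pencil (hbio : W * M * V = 1)
    (heig : K * V = M * V * diagonal lam) :
    (1 - M⁻¹ * K) * V = V * diagonal (1 - lam) := by
  have hM : IsUnit M.det := (isUnit_iff_isUnit_det M).mp (isUnit_of_mul_mul_eq_one hbio).2.1
  rw [Matrix.sub_mul, Matrix.one_mul, Matrix.mul_assoc, heig, Matrix.mul_assoc,
    ← Matrix.mul_assoc M⁻¹, nonsing_inv_mul M hM, Matrix.one_mul, self_sub_mul_diagonal]

variable [DecidableEq κ] {f : κ → ι}

theorem coarse_mul_eq_diagonal (hf : Function.Injective f) (hWKV : W * K * V = diagonal lam) :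
    W.submatrix f id * K * V.submatrix id f = diagonal (lam ∘ f) := by
  rw [submatrix_mul_mul_submatrix, hWKV, submatrix_diagonal _ _ hf]

theorem coarse_correction_mul [Fintype κ] (hf : Function.Injective f)
    (hlam : ∀ k, IsUnit (lam (f k))) (hWKV : W * K * V = diagonal lam) :
    V.submatrix id f * (W.submatrix f id * K * V.submatrix id f)⁻¹ * W.submatrix f id * K * V =
      V * diagonal ((Set.range f).indicator 1) := by
  have hRKV : W.submatrix f id * (K * V) =
      diagonal (lam ∘ f) * (1 : Matrix ι ι R).submatrix f id := by
    rw [← submatrix_diagonal_id, ← hWKV, ← Matrix.mul_assoc]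
    simpa using submatrix_mul_mul_submatrix W K V f id
  have hcoarse : IsUnit (diagonal (lam ∘ f)).det := by
    rw [← isUnit_iff_isUnit_det, isUnit_diagonal, Pi.isUnit_iff]; exact hlam
  rw [Matrix.mul_assoc _ K V, Matrix.mul_assoc _ (W.submatrix f id), hRKV,
    coarse_mul_eq_diagonal hf hWKV, ← Matrix.mul_assoc, Matrix.mul_assoc (V.submatrix id f),
    nonsing_inv_mul _ hcoarse, Matrix.mul_one, submatrix_id_mul_submatrix_one hf]

end Pencil

end Matrix

theorem ETG_mul_eq_mul_diagonal {n nc : ℕ} {K M V W : Matrix (Fin n) (Fin n) ℂ}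
    {lam : Fin n → ℂ} {f : Fin nc → Fin n} (hf : Function.Injective f)
    (hlam : ∀ k, IsUnit (lam (f k))) (hbio : W * M * V = 1)
    (heig : K * V = M * V * diagonal lam) :
    ETG K M (V.submatrix id f) (W.submatrix f id) * V =
      V * diagonal ((Set.range f)ᶜ.indicator (1 - lam)) := by
  rw [ETG, Matrix.mul_assoc, one_sub_inv_mul_mul_of_pencil hbio heig, ← Matrix.mul_assoc,
    Matrix.sub_mul, Matrix.one_mul, Matrix.mul_assoc _ K V, ← Matrix.mul_assoc _ K V,
    coarse_correction_mul hf hlam (mul_mul_eq_diagonal_of_pencil hbio heig),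
    self_sub_mul_diagonal, Matrix.mul_assoc, diagonal_mul_diagonal]
  congr 2
  ext j
  by_cases hj : j ∈ Set.range f <;> simp [hj]

theorem isGreatest_range_norm_indicator_compl_range_castLE {E : Type*}
    [SeminormedAddCommGroup E] {n nc : ℕ} (hncn : nc < n) {g : Fin n → E}
    (hg : Antitone fun i => ‖g i‖) :
    IsGreatest (Set.range fun j => ‖(Set.range (Fin.castLE hncn.le))ᶜ.indicator g j‖)
      ‖g ⟨nc, hncn⟩‖ := by
  rw [Fin.range_castLE]
  refine ⟨⟨⟨nc, hncn⟩, by simp⟩, ?_⟩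
  rintro _ ⟨j, rfl⟩
  by_cases hj : (j : ℕ) < nc
  · simp [hj]
  · simpa [hj] using hg (show ⟨nc, hncn⟩ ≤ j from Fin.le_def.mpr (not_lt.mp hj))

theorem optimal_two_grid_nonsymmetric_general
    {n : ℕ} (K M : Matrix (Fin n) (Fin n) ℂ)
    (hK : IsUnit K)
    (vhat vcheck : Fin n → (Fin n → ℂ)) (lam : Fin n → ℂ)
    (hright : ∀ i, K *ᵥ vhat i = lam i • (M *ᵥ vhat i))
    (horder : Antitone fun i => ‖1 - lam i‖)
    (hbio : ∀ i j, star (vcheck i) ⬝ᵥ (M *ᵥ vhat j) = if i = j then 1 else 0)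
    (nc : ℕ) (hncn : nc < n)
    (Psharp : Matrix (Fin n) (Fin nc) ℂ) (Rsharp : Matrix (Fin nc) (Fin n) ℂ)
    (hP : ∀ i j, Psharp i j = vhat (Fin.castLE hncn.le j) i)
    (hR : ∀ j i, Rsharp j i = star (vcheck (Fin.castLE hncn.le j) i)) :
    IsUnit (Rsharp * K * Psharp) ∧
      specRad (ETG K M Psharp Rsharp) = ‖1 - lam ⟨nc, hncn⟩‖ := by
  set f := Fin.castLE hncn.le
  have hf : Function.Injective f := Fin.castLE_injective _
  set V : Matrix (Fin n) (Fin n) ℂ := (of vhat)ᵀ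
  set W : Matrix (Fin n) (Fin n) ℂ := of fun i => star (vcheck i)
  have hWMV : W * M * V = 1 := by
    ext i j
    exact (mul_mul_apply W M V i j).trans (hbio i j)
  have hKV : K * V = M * V * diagonal lam := mul_eq_mul_mul_diagonal_of_mulVec hright
  have hWKV : W * K * V = diagonal lam := mul_mul_eq_diagonal_of_pencil hWMV hKV
  obtain ⟨hW, -, hV⟩ := isUnit_of_mul_mul_eq_one hWMV
  have hlam : IsUnit lam := by
    rw [← isUnit_diagonal, ← hWKV]; exact (hW.mul hK).mul hV
  obtain rfl : Psharp = V.submatrix id f := by ext i j; exact hP i j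
  obtain rfl : Rsharp = W.submatrix f id := by ext j i; exact hR j i
  have hlamf : ∀ k, IsUnit (lam (f k)) := fun k => Pi.isUnit_iff.mp hlam (f k)
  refine ⟨?_, ?_⟩
  · rw [coarse_mul_eq_diagonal hf hWKV, isUnit_diagonal, Pi.isUnit_iff]
    exact hlamf
  · rw [specRad, spectrum_eq_range_of_mul_eq_mul_diagonal hV
      (ETG_mul_eq_mul_diagonal hf hlamf hWMV hKV), ← Set.range_comp]
    exact (isGreatest_range_norm_indicator_compl_range_castLE hncn horder).csSup_eq

/-- Optimal two-grid convergence identity for a general nonsingular pencil `(K, M)`: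
with interpolation spanned by the first `n_c` right eigenvectors and restriction by the
first `n_c` left eigenvectors (biorthonormalized via `M`), the coarse operator is
invertible and `ρ(E_TG(P♯, R♯)) = |1 − λ_{n_c+1}|`. -/
theorem optimal_two_grid_nonsymmetric
    {n : ℕ} (hn : 0 < n) (K M : Matrix (Fin n) (Fin n) ℂ)
    (hK : IsUnit K) (hM : IsUnit M)
    (vhat vcheck : Fin n → (Fin n → ℂ)) (lam : Fin n → ℂ)
    (hright : ∀ i, K *ᵥ vhat i = lam i • (M *ᵥ vhat i))
    (hleft : ∀ i, (star (vcheck i)) ᵥ* K = lam i • ((star (vcheck i)) ᵥ* M))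
    (hbasis_r : LinearIndependent ℂ vhat)
    (hbasis_l : LinearIndependent ℂ vcheck)
    (horder : Antitone fun i => ‖1 - lam i‖)
    (hbio : ∀ i j, star (vcheck i) ⬝ᵥ (M *ᵥ vhat j) = if i = j then 1 else 0)
    (nc : ℕ) (hnc1 : 1 ≤ nc) (hncn : nc < n)
    (Psharp : Matrix (Fin n) (Fin nc) ℂ) (Rsharp : Matrix (Fin nc) (Fin n) ℂ)
    (hP : ∀ i j, Psharp i j = vhat (Fin.castLE hncn.le j) i)
    (hR : ∀ j i, Rsharp j i = star (vcheck (Fin.castLE hncn.le j) i)) :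
    IsUnit (Rsharp * K * Psharp) ∧
      specRad (ETG K M Psharp Rsharp) = ‖1 - lam ⟨nc, hncn⟩‖ :=
  optimal_two_grid_nonsymmetric_general K M hK vhat vcheck lam hright horder hbio nc hncn Psharp
    Rsharp hP hR
end

section
/- Let K and M be invertible real symmetric n×n matrices such that M⁻¹K is diagonalizable over ℂ, with eigenvectors v_1,…,v_n forming a basis of ℂⁿ and satisfying K v_i = λ_i M v_i, the eigenvalues ordered so that |1−λ_1| ≥ |1−λ_2| ≥ ⋯ ≥ |1−λ_n|, and normalized so that v_iᵀ M v_j = δ_ij (plain transpose, no conjugation). Fix n_c with 1 ≤ n_c < n and assume the coarse space is closed under complex conjugation: for each i ≤ n_c the entrywise complex conjugate of v_i lies in span{v_1,…,v_{n_c}}. Let P_♯ be the n×n_c matrix whose columns are v_1,…,v_{n_c} and set R_♯ = P_♯* (conjugate transpose). Then R_♯ K P_♯ is invertible and the spectral radius of the two-grid error-propagation operator satisfies ρ(E_TG(P_♯, R_♯)) = |1 − λ_{n_c+1}|. -/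
/-!
The normalization says `Vᵀ M V = 1` for the matrix `V` of eigenvectors, so `V` and `M` are
invertible and `Pᵀ K P = diag(λ_1, …, λ_{n_c})`, which is invertible because `K` is. Closure of the
coarse space under conjugation writes `P* = C Pᵀ` with `C` invertible (conjugating twice gives
`Cᵀ Cᴴ = 1`), and a left factor of the restriction cancels from the coarse correction, so
`E_TG(P, P*) = E_TG(P, Pᵀ)`. For the restriction `Pᵀ` every `v_j` is an eigenvector of `E_TG`: the
smoother scales it by `1 - λ_j`, and the coarse correction removes it for `j ≤ n_c` (it lies in the
range of `P`) and leaves it alone for `j > n_c` (`Pᵀ K v_j = λ_j Pᵀ M v_j = 0`). So the spectrum of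
`E_TG` is `{0} ∪ {1 - λ_j : j > n_c}`, and the ordering makes `|1 - λ_{n_c+1}|` its largest modulus.
-/

open Matrix

/-- A real matrix regarded as a complex matrix via `ℝ ⊆ ℂ`. -/
def toC {n : ℕ} (A : Matrix (Fin n) (Fin n) ℝ) : Matrix (Fin n) (Fin n) ℂ :=
  A.map (fun x => (x : ℂ))

theorem mul_mul_apply_eq_dotProduct {ι κ μ 𝕜 : Type*} [Fintype ι] [CommRing 𝕜]
    (A : Matrix κ ι 𝕜) (B : Matrix ι ι 𝕜) (C : Matrix ι μ 𝕜) (k : κ) (l : μ) :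
    (A * B * C) k l = A k ⬝ᵥ B *ᵥ C.col l := by
  rw [Matrix.mul_assoc]
  simp [mul_apply, dotProduct, mulVec]

section CoarseProjection

variable {ι κ 𝕜 : Type*} [Fintype ι] [Fintype κ] [DecidableEq κ] [CommRing 𝕜]
  {K : Matrix ι ι 𝕜} {P : Matrix ι κ 𝕜} {R : Matrix κ ι 𝕜}

noncomputable def coarseProjection (K : Matrix ι ι 𝕜) (P : Matrix ι κ 𝕜) (R : Matrix κ ι 𝕜) :
    Matrix ι ι 𝕜 :=
  P * (R * K * P)⁻¹ * R * K

theorem coarseProjection_mul_prolongation (hRKP : IsUnit (R * K * P)) :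
    coarseProjection K P R * P = P := by
  rw [coarseProjection, Matrix.mul_assoc _ K P, Matrix.mul_assoc _ R, ← Matrix.mul_assoc R,
    Matrix.mul_assoc P, Matrix.nonsing_inv_mul _ ((isUnit_iff_isUnit_det _).mp hRKP),
    Matrix.mul_one]

theorem coarseProjection_mulVec_eq_zero {w : ι → 𝕜} (hw : R *ᵥ K *ᵥ w = 0) :
    coarseProjection K P R *ᵥ w = 0 := by
  rw [coarseProjection, Matrix.mul_assoc _ R K, ← Matrix.mulVec_mulVec,
    ← Matrix.mulVec_mulVec w R K, hw, mulVec_zero]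

theorem coarseProjection_mul_left {X : Matrix κ κ 𝕜} (hX : IsUnit X) :
    coarseProjection K P (X * R) = coarseProjection K P R := by
  simp only [coarseProjection, Matrix.mul_assoc X, Matrix.mul_inv_rev, Matrix.mul_assoc]
  rw [← Matrix.mul_assoc X⁻¹, Matrix.nonsing_inv_mul _ ((isUnit_iff_isUnit_det _).mp hX),
    Matrix.one_mul]

end CoarseProjection

section Pencil

variable {ι κ 𝕜 : Type*} [Fintype ι] [CommRing 𝕜] {K M : Matrix ι ι 𝕜}

theorem transpose_mul_mul_eq_one_of_col_eq [DecidableEq ι] [DecidableEq κ] {v : ι → ι → 𝕜}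
    (hv : ∀ i j, v i ⬝ᵥ M *ᵥ v j = if i = j then 1 else 0) {e : κ → ι}
    (he : Function.Injective e) {P : Matrix ι κ 𝕜} (hP : ∀ k, P.col k = v (e k)) :
    Pᵀ * M * P = 1 := by
  ext k l
  rw [mul_mul_apply_eq_dotProduct]
  change P.col k ⬝ᵥ _ = _
  rw [hP, hP, hv, one_apply]
  simp only [he.eq_iff]

theorem isUnit_and_isUnit_of_transpose_mul_mul_eq_one [DecidableEq ι] {V : Matrix ι ι 𝕜}
    (h : Vᵀ * M * V = 1) : IsUnit M ∧ IsUnit V := by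
  have hdet := congrArg det h
  rw [det_mul, det_mul, det_transpose, det_one] at hdet
  exact ⟨(isUnit_iff_isUnit_det M).2 (.of_mul_eq_one (V.det * V.det) (by linear_combination hdet)),
    (isUnit_iff_isUnit_det V).2 (.of_mul_eq_one (V.det * M.det) (by linear_combination hdet))⟩

theorem transpose_mul_mul_eq_diagonal [DecidableEq κ] {P : Matrix ι κ 𝕜} {μ : κ → 𝕜}
    (hP : Pᵀ * M * P = 1) (heig : ∀ k, K *ᵥ P.col k = μ k • M *ᵥ P.col k) :
    Pᵀ * K * P = diagonal μ := by
  ext k l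
  rw [mul_mul_apply_eq_dotProduct, heig, dotProduct_smul, ← mul_mul_apply_eq_dotProduct, hP,
    one_apply, diagonal_apply]
  split_ifs with hkl <;> simp [hkl]

theorem eigenvalue_ne_zero [DecidableEq ι] (hK : IsUnit K) {w : ι → 𝕜} {μ : 𝕜}
    (hw : K *ᵥ w = μ • M *ᵥ w) (hw0 : w ≠ 0) : μ ≠ 0 := by
  rintro rfl
  rw [zero_smul] at hw
  apply hw0
  rw [← one_mulVec w, ← Matrix.nonsing_inv_mul _ ((isUnit_iff_isUnit_det _).mp hK),
    ← Matrix.mulVec_mulVec, hw, mulVec_zero]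

theorem one_sub_inv_mul_mulVec_of_eigen [DecidableEq ι] (hM : IsUnit M) {w : ι → 𝕜} {μ : 𝕜}
    (hw : K *ᵥ w = μ • M *ᵥ w) : (1 - M⁻¹ * K) *ᵥ w = (1 - μ) • w := by
  rw [sub_mulVec, one_mulVec, ← Matrix.mulVec_mulVec, hw, mulVec_smul, Matrix.mulVec_mulVec,
    Matrix.nonsing_inv_mul _ ((isUnit_iff_isUnit_det _).mp hM), one_mulVec, sub_smul, one_smul]

end Pencil

theorem exists_isUnit_conjTranspose_eq_mul_transpose {ι κ 𝕜 : Type*} [Fintype ι] [Fintype κ]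
    [DecidableEq κ] [CommRing 𝕜] [StarRing 𝕜] {P : Matrix ι κ 𝕜} {L : Matrix κ ι 𝕜}
    (hL : L * P = 1) (hconj : ∀ k, star (P.col k) ∈ Submodule.span 𝕜 (Set.range P.col)) :
    ∃ C : Matrix κ κ 𝕜, IsUnit C ∧ Pᴴ = C * Pᵀ := by
  simp_rw [← range_mulVecLin, LinearMap.mem_range, mulVecLin_apply] at hconj
  choose c hc using hconj
  set C := of c
  have hPH : Pᴴ = C * Pᵀ := by
    ext k i
    have := congrFun (hc k) i
    simp only [mulVec, dotProduct, col_apply, Pi.star_apply] at this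
    simp [C, mul_apply, ← this, mul_comm]
  have hPT : Pᵀᴴ = P * Cᵀ := by
    rw [transpose_conjTranspose, ← conjTranspose_transpose, hPH, transpose_mul, transpose_transpose]
  have hP : P * (Cᵀ * Cᴴ) = P := by
    rw [← Matrix.mul_assoc, ← hPT, ← conjTranspose_mul, ← hPH, conjTranspose_conjTranspose]
  have hCC : Cᵀ * Cᴴ = 1 := by
    simpa only [← Matrix.mul_assoc, hL, Matrix.one_mul] using congrArg (L * ·) hP
  refine ⟨C, (isUnit_iff_isUnit_det C).2 ?_, hPH⟩
  simpa only [det_transpose] using isUnit_det_of_right_inverse hCC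

theorem spectrum_eq_range_of_mulVec_col {ι 𝕜 : Type*} [Fintype ι] [DecidableEq ι] [Field 𝕜]
    {A V : Matrix ι ι 𝕜} (hV : IsUnit V) {d : ι → 𝕜} (h : ∀ j, A *ᵥ V.col j = d j • V.col j) :
    spectrum 𝕜 A = Set.range d := by
  have hAV : A * V = V * diagonal d := by
    ext i j
    rw [mul_diagonal]
    simpa [mul_apply, mulVec, dotProduct, mul_comm] using congrFun (h j) i
  obtain ⟨u, rfl⟩ := hV
  have hA : A = u * diagonal d * (↑u⁻¹ : Matrix ι ι 𝕜) := by
    rw [← hAV, Matrix.mul_assoc, Units.mul_inv, Matrix.mul_one]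
  rw [hA, spectrum.units_conjugate, spectrum_diagonal]

section TwoGrid

variable {n nc : ℕ} {K M : Matrix (Fin n) (Fin n) ℂ} {P : Matrix (Fin n) (Fin nc) ℂ}

theorem ETG_eq_coarseProjection (R : Matrix (Fin nc) (Fin n) ℂ) :
    ETG K M P R = (1 - coarseProjection K P R) * (1 - M⁻¹ * K) :=
  rfl

theorem ETG_mul_left {R : Matrix (Fin nc) (Fin n) ℂ} {X : Matrix (Fin nc) (Fin nc) ℂ}
    (hX : IsUnit X) : ETG K M P (X * R) = ETG K M P R := by
  rw [ETG_eq_coarseProjection, ETG_eq_coarseProjection, coarseProjection_mul_left hX]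

theorem ETG_transpose_mulVec_eigenvector (h : nc ≤ n) (hM : IsUnit M) {v : Fin n → Fin n → ℂ}
    {lam : Fin n → ℂ} (hv : ∀ i j, v i ⬝ᵥ M *ᵥ v j = if i = j then 1 else 0)
    (heig : ∀ i, K *ᵥ v i = lam i • M *ᵥ v i) (hP : ∀ k, P.col k = v (Fin.castLE h k))
    (hPKP : IsUnit (Pᵀ * K * P)) (j : Fin n) :
    ETG K M P Pᵀ *ᵥ v j = (if (j : ℕ) < nc then 0 else 1 - lam j) • v j := by
  rw [ETG_eq_coarseProjection, ← Matrix.mulVec_mulVec, one_sub_inv_mul_mulVec_of_eigen hM (heig j),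
    mulVec_smul, sub_mulVec, one_mulVec]
  split_ifs with hj
  · have hvj : v j = P *ᵥ Pi.single ⟨j, hj⟩ 1 := by rw [mulVec_single_one, hP]; rfl
    rw [hvj, Matrix.mulVec_mulVec, coarseProjection_mul_prolongation hPKP, sub_self, smul_zero,
      zero_smul]
  · have hRK : Pᵀ *ᵥ K *ᵥ v j = 0 := by
      ext k
      change P.col k ⬝ᵥ K *ᵥ v j = 0
      rw [heig, hP, dotProduct_smul, hv, if_neg, smul_zero]
      exact fun hkj => hj (hkj ▸ k.isLt)
    rw [coarseProjection_mulVec_eq_zero hRK, sub_zero]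

theorem isGreatest_norm_range_ite (h : nc < n) {lam : Fin n → ℂ}
    (horder : Antitone fun i => ‖1 - lam i‖) :
    IsGreatest ((‖·‖) '' Set.range fun j : Fin n => if (j : ℕ) < nc then 0 else 1 - lam j)
      ‖1 - lam ⟨nc, h⟩‖ := by
  rw [← Set.range_comp]
  refine ⟨⟨⟨nc, h⟩, by simp⟩, ?_⟩
  rintro _ ⟨j, rfl⟩
  simp only [Function.comp_apply]
  split_ifs with hj
  · simp
  · exact horder (Fin.le_def.2 (not_lt.1 hj))

end TwoGrid

theorem optimal_two_grid_symmetric_general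
    {n : ℕ} (Kr Mr : Matrix (Fin n) (Fin n) ℝ)
    (hK : IsUnit (toC Kr))
    (v : Fin n → (Fin n → ℂ)) (lam : Fin n → ℂ)
    (heig : ∀ i, (toC Kr) *ᵥ v i = lam i • ((toC Mr) *ᵥ v i))
    (horder : Antitone fun i => ‖1 - lam i‖)
    (hnorm : ∀ i j, v i ⬝ᵥ ((toC Mr) *ᵥ v j) = if i = j then 1 else 0)
    (nc : ℕ) (hncn : nc < n)
    (hconj : ∀ i : Fin n, (i : ℕ) < nc →
      star (v i) ∈ Submodule.span ℂ {w : Fin n → ℂ | ∃ j : Fin n, (j : ℕ) < nc ∧ w = v j})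
    (Psharp : Matrix (Fin n) (Fin nc) ℂ)
    (hP : ∀ i j, Psharp i j = v (Fin.castLE hncn.le j) i) :
    IsUnit (Psharpᴴ * (toC Kr) * Psharp) ∧
      specRad (ETG (toC Kr) (toC Mr) Psharp Psharpᴴ) = ‖1 - lam ⟨nc, hncn⟩‖ := by
  have hPcol : ∀ k, Psharp.col k = v (Fin.castLE hncn.le k) := fun k => funext fun i => hP i k
  have hPMP := transpose_mul_mul_eq_one_of_col_eq hnorm (Fin.castLE_injective hncn.le) hPcol
  obtain ⟨hM, hV⟩ := isUnit_and_isUnit_of_transpose_mul_mul_eq_one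
    (transpose_mul_mul_eq_one_of_col_eq hnorm Function.injective_id (P := (of v)ᵀ) fun _ => rfl)
  have hPKP : IsUnit (Psharpᵀ * toC Kr * Psharp) := by
    rw [transpose_mul_mul_eq_diagonal hPMP fun k => hPcol k ▸ heig _, isUnit_diagonal]
    refine Pi.isUnit_iff.2 fun k => (eigenvalue_ne_zero hK (heig _) fun h0 => ?_).isUnit
    simpa [h0] using hnorm (Fin.castLE hncn.le k) (Fin.castLE hncn.le k)
  have hcoarse :
      {w : Fin n → ℂ | ∃ j : Fin n, (j : ℕ) < nc ∧ w = v j} = Set.range Psharp.col := by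
    ext w
    constructor
    · rintro ⟨j, hj, rfl⟩
      exact ⟨⟨j, hj⟩, hPcol _⟩
    · rintro ⟨k, rfl⟩
      exact ⟨_, k.isLt, hPcol k⟩
  obtain ⟨C, hC, hPH⟩ := exists_isUnit_conjTranspose_eq_mul_transpose hPMP fun k =>
    hcoarse ▸ hPcol k ▸ hconj _ k.isLt
  refine ⟨?_, ?_⟩
  · simpa only [hPH, Matrix.mul_assoc] using hC.mul (by simpa only [Matrix.mul_assoc] using hPKP)
  · rw [hPH, ETG_mul_left hC, specRad, spectrum_eq_range_of_mulVec_col hV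
      (ETG_transpose_mulVec_eigenvector hncn.le hM hnorm heig hPcol hPKP)]
    exact (isGreatest_norm_range_ite hncn horder).csSup_eq

/-- Optimal two-grid convergence identity for a real symmetric (possibly indefinite)
pencil `(K, M)`: with `P♯` spanned by the first `n_c` eigenvectors (with the coarse
space closed under complex conjugation) and `R♯ = P♯*`, the coarse operator is
invertible and `ρ(E_TG(P♯, R♯)) = |1 − λ_{n_c+1}|`. -/
theorem optimal_two_grid_symmetric
    {n : ℕ} (hn : 0 < n) (Kr Mr : Matrix (Fin n) (Fin n) ℝ)
    (hKsymm : Kr.IsSymm) (hMsymm : Mr.IsSymm)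
    (hK : IsUnit (toC Kr)) (hM : IsUnit (toC Mr))
    (v : Fin n → (Fin n → ℂ)) (lam : Fin n → ℂ)
    (heig : ∀ i, (toC Kr) *ᵥ v i = lam i • ((toC Mr) *ᵥ v i))
    (hbasis : LinearIndependent ℂ v)
    (horder : Antitone fun i => ‖1 - lam i‖)
    (hnorm : ∀ i j, v i ⬝ᵥ ((toC Mr) *ᵥ v j) = if i = j then 1 else 0)
    (nc : ℕ) (hnc1 : 1 ≤ nc) (hncn : nc < n)
    (hconj : ∀ i : Fin n, (i : ℕ) < nc →
      star (v i) ∈ Submodule.span ℂ {w : Fin n → ℂ | ∃ j : Fin n, (j : ℕ) < nc ∧ w = v j})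
    (Psharp : Matrix (Fin n) (Fin nc) ℂ)
    (hP : ∀ i j, Psharp i j = v (Fin.castLE hncn.le j) i) :
    IsUnit (Psharpᴴ * (toC Kr) * Psharp) ∧
      specRad (ETG (toC Kr) (toC Mr) Psharp Psharpᴴ) = ‖1 - lam ⟨nc, hncn⟩‖ :=
  optimal_two_grid_symmetric_general Kr Mr hK v lam heig horder hnorm nc hncn hconj Psharp hP
end

section
/- Let K and M be invertible n×n complex matrices, let v̂_1,…,v̂_n be right eigenvectors and v̌_1,…,v̌_n left eigenvectors of the pencil (K,M) with pairwise common eigenvalues λ_1,…,λ_n and biorthonormalized so that v̌_i* M v̂_j = δ_ij. Fix n_c with 1 ≤ n_c < n, let P_♯ have columns v̂_1,…,v̂_{n_c} and R_♯ have rows v̌_1*,…,v̌_{n_c}*, and assume R_♯ K P_♯ is invertible. Then each remaining right eigenvector is an eigenvector of the two-grid error-propagation operator: E_TG(P_♯, R_♯) v̂_j = (1 − λ_j) v̂_j for all j with n_c < j ≤ n. -/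
open Matrix

section

variable {m n p : Type*} [Fintype m] [Fintype n] [Fintype p] {α : Type*}

theorem Matrix.one_sub_inv_mul_mulVec_of_mulVec_eq_smul_mulVec [DecidableEq n] [CommRing α]
    {K M : Matrix n n α} (hM : IsUnit M) {v : n → α} {μ : α}
    (hv : K *ᵥ v = μ • (M *ᵥ v)) :
    (1 - M⁻¹ * K) *ᵥ v = (1 - μ) • v := by
  rw [sub_mulVec, one_mulVec, ← mulVec_mulVec, hv, mulVec_smul, mulVec_mulVec,
    nonsing_inv_mul M ((isUnit_iff_isUnit_det M).mp hM), one_mulVec, sub_smul, one_smul]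

theorem Matrix.one_sub_mul_mulVec_of_mulVec_eq_zero [DecidableEq m] [Ring α]
    (P : Matrix m p α) (X : Matrix p p α) (R : Matrix p m α) (K : Matrix m m α) {v : m → α}
    (hv : R *ᵥ (K *ᵥ v) = 0) :
    (1 - P * X * R * K) *ᵥ v = v := by
  rw [sub_mulVec, one_mulVec, ← mulVec_mulVec, ← mulVec_mulVec, hv, mulVec_zero, sub_zero]

end

theorem ETG_mulVec_of_mulVec_eq_smul_mulVec {n nc : ℕ} {K M : Matrix (Fin n) (Fin n) ℂ}
    (hM : IsUnit M) (P : Matrix (Fin n) (Fin nc) ℂ) {R : Matrix (Fin nc) (Fin n) ℂ}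
    {v : Fin n → ℂ} {μ : ℂ} (hv : K *ᵥ v = μ • (M *ᵥ v)) (hRv : R *ᵥ (M *ᵥ v) = 0) :
    ETG K M P R *ᵥ v = (1 - μ) • v := by
  have hRKv : R *ᵥ (K *ᵥ v) = 0 := by rw [hv, mulVec_smul, hRv, smul_zero]
  rw [ETG, ← mulVec_mulVec, one_sub_inv_mul_mulVec_of_mulVec_eq_smul_mulVec hM hv, mulVec_smul,
    one_sub_mul_mulVec_of_mulVec_eq_zero _ _ _ _ hRKv]

theorem mulVec_eq_zero_of_biorthonormal {α : Type*} [NonAssocSemiring α] [Star α] {n nc : ℕ}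
    (hncn : nc ≤ n) (M : Matrix (Fin n) (Fin n) α) {vhat vcheck : Fin n → (Fin n → α)}
    (hbio : ∀ i j, star (vcheck i) ⬝ᵥ (M *ᵥ vhat j) = if i = j then 1 else 0)
    {R : Matrix (Fin nc) (Fin n) α} (hR : ∀ j i, R j i = star (vcheck (Fin.castLE hncn j) i))
    {j : Fin n} (hj : nc ≤ (j : ℕ)) :
    R *ᵥ (M *ᵥ vhat j) = 0 := by
  ext i
  have hij : Fin.castLE hncn i ≠ j := Fin.ne_of_val_ne (i.isLt.trans_le hj).ne
  have hrow : R i = star (vcheck (Fin.castLE hncn i)) := funext (hR i)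
  calc (R *ᵥ (M *ᵥ vhat j)) i = star (vcheck (Fin.castLE hncn i)) ⬝ᵥ (M *ᵥ vhat j) := by
        rw [← hrow]; rfl
    _ = 0 := by rw [hbio, if_neg hij]

theorem two_grid_fine_eigenvectors_general
    {n : ℕ} (K M : Matrix (Fin n) (Fin n) ℂ)
    (hM : IsUnit M)
    (vhat vcheck : Fin n → (Fin n → ℂ)) (lam : Fin n → ℂ)
    (hright : ∀ i, K *ᵥ vhat i = lam i • (M *ᵥ vhat i))
    (hbio : ∀ i j, star (vcheck i) ⬝ᵥ (M *ᵥ vhat j) = if i = j then 1 else 0)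
    (nc : ℕ) (hncn : nc < n)
    (Psharp : Matrix (Fin n) (Fin nc) ℂ) (Rsharp : Matrix (Fin nc) (Fin n) ℂ)
    (hR : ∀ j i, Rsharp j i = star (vcheck (Fin.castLE hncn.le j) i)) :
    ∀ j : Fin n, nc ≤ (j : ℕ) →
      (ETG K M Psharp Rsharp) *ᵥ vhat j = (1 - lam j) • vhat j := fun j hj =>
  ETG_mulVec_of_mulVec_eq_smul_mulVec hM Psharp (hright j)
    (mulVec_eq_zero_of_biorthonormal hncn.le M hbio hR hj)

/-- Each remaining right eigenvector (index `j > n_c`) of the biorthonormalized pencil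
`(K, M)` is an eigenvector of the two-grid error-propagation operator:
`E_TG(P♯, R♯) v̂_j = (1 − λ_j) v̂_j`. -/
theorem two_grid_fine_eigenvectors
    {n : ℕ} (K M : Matrix (Fin n) (Fin n) ℂ)
    (hK : IsUnit K) (hM : IsUnit M)
    (vhat vcheck : Fin n → (Fin n → ℂ)) (lam : Fin n → ℂ)
    (hright : ∀ i, K *ᵥ vhat i = lam i • (M *ᵥ vhat i))
    (hleft : ∀ i, (star (vcheck i)) ᵥ* K = lam i • ((star (vcheck i)) ᵥ* M))
    (hbio : ∀ i j, star (vcheck i) ⬝ᵥ (M *ᵥ vhat j) = if i = j then 1 else 0)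
    (nc : ℕ) (hnc1 : 1 ≤ nc) (hncn : nc < n)
    (Psharp : Matrix (Fin n) (Fin nc) ℂ) (Rsharp : Matrix (Fin nc) (Fin n) ℂ)
    (hP : ∀ i j, Psharp i j = vhat (Fin.castLE hncn.le j) i)
    (hR : ∀ j i, Rsharp j i = star (vcheck (Fin.castLE hncn.le j) i))
    (hcoarse : IsUnit (Rsharp * K * Psharp)) :
    ∀ j : Fin n, nc ≤ (j : ℕ) →
      (ETG K M Psharp Rsharp) *ᵥ vhat j = (1 - lam j) • vhat j :=
  two_grid_fine_eigenvectors_general K M hM vhat vcheck lam hright hbio nc hncn Psharp Rsharp hR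
end
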